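/- arXiv:0704.0965 — 2 statements merged into one kernel-verified Lean document; each statement's English description precedes it below -/
import Mathlib

section
/- A normalized n-partite amplitude tensor a is separable if and only if for every party k, det(M_k * M_kᴴ − 1) = 0, where M_kᴴ is the conjugate transpose of the k-th flattening M_k and 1 denotes the identity matrix of the same size as M_k * M_kᴴ. -/
/-!
For a matrix `M` with `tr (M Mᴴ) = 1`, the positive semidefinite matrix `M Mᴴ` has eigenvalues
summing to `1`, so `det (M Mᴴ - 1) = 0` holds exactly when `M` has rank one. Concretely, for a
unit vector `x` with `M Mᴴ x = x` the projection `P = x xᴴ` gives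
`tr ((M - P M) (M - P M)ᴴ) = tr (M Mᴴ) - tr P = 0`, hence `M = x (xᴴ M)`.

The `k`-th flattening has rank one iff the tensor factors across the cut `{k} | rest`. If it does
for every `k`, swapping the `k`-th coordinates of two index tuples preserves the product of the two
entries, and changing the coordinates of a nonzero entry `a i₀` one at a time yields
`a i * a i₀ ^ n = a i₀ * ∏ k, a (update i₀ k (i k))`, a product formula.
-/

open Matrix

noncomputable section

/-- Insert `j` at position `k` into the partial index tuple `I`, producing a full index tuple. -/
def insertAt {n : ℕ} {d : Fin n → ℕ} (k : Fin n)
    (I : ∀ s : {s : Fin n // s ≠ k}, Fin (d s)) (j : Fin (d k)) :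
    ∀ t : Fin n, Fin (d t) :=
  fun t => if h : t = k then Fin.cast (congrArg d h).symm j else I ⟨t, h⟩

/-- The `k`-th flattening of an `n`-partite amplitude tensor `a`. -/
def flatten {n : ℕ} {d : Fin n → ℕ} (a : (∀ t : Fin n, Fin (d t)) → ℂ) (k : Fin n) :
    Matrix (∀ s : {s : Fin n // s ≠ k}, Fin (d s)) (Fin (d k)) ℂ :=
  fun I j => a (insertAt k I j)

/-- An `n`-partite amplitude tensor is separable if it is a product of local vectors. -/
def Separable {n : ℕ} {d : Fin n → ℕ} (a : (∀ t : Fin n, Fin (d t)) → ℂ) : Prop :=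
  ∃ f : ∀ k : Fin n, Fin (d k) → ℂ, ∀ i, a i = ∏ k : Fin n, f k (i k)

/-- An `n`-partite amplitude tensor is normalized if the squared amplitudes sum to 1. -/
def Normalized {n : ℕ} {d : Fin n → ℕ} (a : (∀ t : Fin n, Fin (d t)) → ℂ) : Prop :=
  ∑ i : ∀ t : Fin n, Fin (d t), ‖a i‖ ^ 2 = 1

namespace Matrix

open scoped ComplexOrder

variable {ι κ 𝕜 : Type*} [Fintype ι] [Fintype κ] [DecidableEq ι] [RCLike 𝕜]

lemma exists_mulVec_eq_self_of_det_sub_one_eq_zero {A : Matrix ι ι 𝕜} (hA : (A - 1).det = 0) :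
    ∃ x, A *ᵥ x = x ∧ star x ⬝ᵥ x = 1 := by
  obtain ⟨y, hy, hAy⟩ := exists_mulVec_eq_zero_iff.mpr hA
  rw [sub_mulVec, one_mulVec, sub_eq_zero] at hAy
  obtain ⟨s, hs, hsy⟩ := RCLike.pos_iff_exists_ofReal.mp (dotProduct_star_self_pos_iff.mpr hy)
  refine ⟨((√s)⁻¹ : ℝ) • y, by rw [mulVec_smul, hAy], ?_⟩
  rw [star_smul, smul_dotProduct, dotProduct_smul, ← hsy, star_trivial, smul_smul,
    ← mul_inv, Real.mul_self_sqrt hs.le, RCLike.real_smul_eq_coe_mul, RCLike.ofReal_inv,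
    inv_mul_cancel₀ (RCLike.ofReal_ne_zero.mpr hs.ne')]

lemma det_sub_one_eq_zero_of_mulVec_eq_self {A : Matrix ι ι 𝕜} {x : ι → 𝕜} (hx : x ≠ 0)
    (hAx : A *ᵥ x = x) : (A - 1).det = 0 :=
  exists_mulVec_eq_zero_iff.mp ⟨x, hx, by rw [sub_mulVec, one_mulVec, hAx, sub_self]⟩

theorem det_mul_conjTranspose_sub_one_eq_zero_iff {M : Matrix ι κ 𝕜} (hM : (M * Mᴴ).trace = 1) :
    (M * Mᴴ - 1).det = 0 ↔ ∃ g f, M = vecMulVec g f := by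
  constructor
  · intro h
    obtain ⟨x, hAx, hx⟩ := exists_mulVec_eq_self_of_det_sub_one_eq_zero h
    set A := M * Mᴴ
    set P := vecMulVec x (star x)
    have hAH : Aᴴ = A := (isHermitian_mul_conjTranspose_self M).eq
    have hPH : Pᴴ = P := by simp [P]
    have hAP : A * P = P := by simp only [P, mul_vecMulVec, hAx]
    have hPA : P * A = P := by rw [← hPH, ← hAH, ← conjTranspose_mul, hAP]
    have hPP : P * P = P := by simp only [P, vecMulVec_mul_vecMulVec, hx, one_smul]
    have hN : ((1 - P) * M) * ((1 - P) * M)ᴴ = A - P := by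
      calc ((1 - P) * M) * ((1 - P) * M)ᴴ = (1 - P) * A * (1 - P) := by
            rw [conjTranspose_mul, conjTranspose_sub, conjTranspose_one, hPH]
            simp only [A, Matrix.mul_assoc]
        _ = A - P := by
            simp only [sub_mul, mul_sub, Matrix.one_mul, Matrix.mul_one, hAP, hPA, hPP]
            abel
    have htr : (((1 - P) * M) * ((1 - P) * M)ᴴ).trace = 0 := by
      rw [hN, trace_sub, hM, trace_vecMulVec, dotProduct_comm, hx, sub_self]
    refine ⟨x, star x ᵥ* M, ?_⟩
    rw [trace_mul_conjTranspose_self_eq_zero_iff, Matrix.sub_mul, Matrix.one_mul,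
      sub_eq_zero] at htr
    exact htr.trans (vecMulVec_mul _ _ _)
  · rintro ⟨g, f, rfl⟩
    rw [conjTranspose_vecMulVec, vecMulVec_mul_vecMulVec, trace_vecMulVec] at *
    have hg : g ≠ 0 := by rintro rfl; simp at hM
    refine det_sub_one_eq_zero_of_mulVec_eq_self hg ?_
    rw [vecMulVec_mulVec, dotProduct_comm, hM, MulOpposite.op_one, one_smul]

end Matrix

section SplitsAt

open Function

variable {ι : Type*} [DecidableEq ι] {β : ι → Type*} {K : Type*}

def SplitsAt [Mul K] (a : (∀ k, β k) → K) (k : ι) : Prop :=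
  ∃ (g : (∀ s : {s // s ≠ k}, β s) → K) (f : β k → K), ∀ x, a x = g (fun s => x s) * f (x k)

lemma splitsAt_of_eq_prod [CommMonoid K] [Fintype ι] {a : (∀ k, β k) → K} {f : ∀ k, β k → K}
    (h : ∀ i, a i = ∏ k, f k (i k)) (k : ι) : SplitsAt a k :=
  ⟨fun I => ∏ s : {s // s ≠ k}, f s (I s), f k, fun x => by
    rw [h, Fintype.prod_eq_mul_prod_subtype_ne _ k, mul_comm]⟩

lemma SplitsAt.mul_eq_mul_update [CommMonoid K] {a : (∀ k, β k) → K} {k : ι} (h : SplitsAt a k)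
    (x y : ∀ k, β k) : a x * a y = a (update x k (y k)) * a (update y k (x k)) := by
  obtain ⟨g, f, hgf⟩ := h
  have hres (z : ∀ k, β k) (v : β k) :
      (fun s : {s // s ≠ k} => update z k v s) = fun s : {s // s ≠ k} => z s :=
    funext fun s => update_of_ne s.2 v z
  rw [hgf, hgf, hgf, hgf, hres, hres, update_self, update_self]
  ac_rfl

variable [CommGroupWithZero K] {a : (∀ k, β k) → K}

lemma mul_pow_card_eq_mul_prod_update (h : ∀ k, SplitsAt a k) (i i₀ : ∀ k, β k) (S : Finset ι) :
    a (S.piecewise i i₀) * a i₀ ^ S.card = a i₀ * ∏ k ∈ S, a (update i₀ k (i k)) := by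
  induction S using Finset.induction_on with
  | empty => simp
  | insert k S hk ih =>
    have hswap := (h k).mul_eq_mul_update (S.piecewise i i₀) (update i₀ k (i k))
    rw [update_self, update_idem, Finset.piecewise_eq_of_notMem _ _ _ hk, update_eq_self,
      ← Finset.piecewise_insert] at hswap
    rw [Finset.prod_insert hk, Finset.card_insert_of_notMem hk, pow_succ, ← mul_assoc,
      mul_right_comm, ← hswap, mul_right_comm, ih]
    ac_rfl

lemma exists_eq_prod_of_forall_splitsAt [Fintype ι] [Nonempty ι] (h : ∀ k, SplitsAt a k) :
    ∃ f : ∀ k, β k → K, ∀ i, a i = ∏ k, f k (i k) := by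
  by_cases ha : ∀ i, a i = 0
  · exact ⟨0, fun i => by simp [ha]⟩
  push Not at ha
  obtain ⟨i₀, hi₀⟩ := ha
  obtain ⟨k₀⟩ := ‹Nonempty ι›
  refine ⟨fun k j => a (update i₀ k j) / a i₀ * (if k = k₀ then a i₀ else 1), fun i => ?_⟩
  have := mul_pow_card_eq_mul_prod_update h i i₀ Finset.univ
  rw [Finset.piecewise_univ] at this
  rw [Finset.prod_mul_distrib, Finset.prod_ite_eq', if_pos (Finset.mem_univ _),
    Finset.prod_div_distrib, Finset.prod_const,
    div_mul_eq_mul_div, eq_div_iff (pow_ne_zero _ hi₀), this, mul_comm]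

end SplitsAt

section Flatten

variable {n : ℕ} {d : Fin n → ℕ}

lemma insertAt_eq_piSplitAt_symm (k : Fin n) (I : ∀ s : {s : Fin n // s ≠ k}, Fin (d s))
    (j : Fin (d k)) : insertAt k I j = (Equiv.piSplitAt k (fun t => Fin (d t))).symm (j, I) := by
  funext t
  by_cases h : t = k
  · subst h
    simp [insertAt, Equiv.piSplitAt]
  · simp [insertAt, Equiv.piSplitAt, h]

@[simp]
lemma insertAt_self (k : Fin n) (I : ∀ s : {s : Fin n // s ≠ k}, Fin (d s)) (j : Fin (d k)) :
    insertAt k I j k = j := by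
  simp [insertAt]

@[simp]
lemma insertAt_of_ne (k : Fin n) (I : ∀ s : {s : Fin n // s ≠ k}, Fin (d s)) (j : Fin (d k))
    (s : {s : Fin n // s ≠ k}) : insertAt k I j s = I s := by
  simp [insertAt, s.2]

lemma insertAt_restrict (k : Fin n) (x : ∀ t : Fin n, Fin (d t)) :
    insertAt k (fun s => x s) (x k) = x := by
  rw [insertAt_eq_piSplitAt_symm]
  exact (Equiv.piSplitAt k _).symm_apply_apply x

lemma sum_eq_sum_sum_insertAt {M : Type*} [AddCommMonoid M] (k : Fin n)
    (φ : (∀ t : Fin n, Fin (d t)) → M) : ∑ i, φ i = ∑ I, ∑ j, φ (insertAt k I j) := by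
  simp only [insertAt_eq_piSplitAt_symm]
  rw [← (Equiv.piSplitAt k _).symm.sum_comp, Fintype.sum_prod_type, Finset.sum_comm]

lemma trace_flatten_mul_conjTranspose (a : (∀ t : Fin n, Fin (d t)) → ℂ) (k : Fin n) :
    (flatten a k * (flatten a k)ᴴ).trace = ∑ i, a i * star (a i) := by
  simp only [trace, diag, mul_apply, conjTranspose_apply, flatten]
  exact (sum_eq_sum_sum_insertAt k fun i => a i * star (a i)).symm

lemma exists_flatten_eq_vecMulVec_iff (a : (∀ t : Fin n, Fin (d t)) → ℂ) (k : Fin n) :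
    (∃ g f, flatten a k = vecMulVec g f) ↔ SplitsAt a k := by
  refine exists_congr fun g => exists_congr fun f => ⟨fun h x => ?_, fun h => ?_⟩
  · simpa only [flatten, vecMulVec_apply, insertAt_restrict] using
      congr_fun₂ h (fun s => x s) (x k)
  · ext I j
    simp only [flatten, vecMulVec_apply, h, insertAt_self, insertAt_of_ne]

end Flatten

theorem separable_iff_det_general {n : ℕ} (hn : 1 ≤ n) (d : Fin n → ℕ)
    (a : (∀ t : Fin n, Fin (d t)) → ℂ) (ha : Normalized a) :
    Separable a ↔
      ∀ k : Fin n, Matrix.det (flatten a k * (flatten a k)ᴴ - 1) = 0 := by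
  have htrace (k : Fin n) : (flatten a k * (flatten a k)ᴴ).trace = 1 := by
    rw [trace_flatten_mul_conjTranspose]
    simp only [Complex.star_def, Complex.mul_conj']
    exact_mod_cast ha
  have : Nonempty (Fin n) := ⟨⟨0, hn⟩⟩
  simp only [det_mul_conjTranspose_sub_one_eq_zero_iff (htrace _),
    exists_flatten_eq_vecMulVec_iff]
  exact ⟨fun ⟨f, hf⟩ => splitsAt_of_eq_prod hf, exists_eq_prod_of_forall_splitsAt⟩

/-- Theorem 2: separability iff `det (M_k M_kᴴ - 1) = 0` for every party `k`. -/
theorem separable_iff_det {n : ℕ} (hn : 1 ≤ n) (d : Fin n → ℕ) (hd : ∀ k, 1 ≤ d k)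
    (a : (∀ t : Fin n, Fin (d t)) → ℂ) (ha : Normalized a) :
    Separable a ↔
      ∀ k : Fin n, Matrix.det (flatten a k * (flatten a k)ᴴ - 1) = 0 :=
  separable_iff_det_general hn d a ha
end
end

section
/- Let M be a complex square matrix over a nonempty finite index type that is Hermitian, positive semidefinite, and has trace 1. Then M has rank 1 if and only if det(M − 1) = 0, where 1 denotes the identity matrix. -/
open Matrix
open scoped ComplexOrder

/-!
The eigenvalues of `M` are nonnegative reals summing to `tr M = 1`, the rank of `M` is the number
of nonzero eigenvalues, and `det (M - 1) = 0` says that `1` is an eigenvalue. A family of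
nonnegative numbers with sum `1` has exactly one nonzero member iff one of its members is `1`.
-/

theorem card_ne_zero_eq_one_iff_exists_eq_one {ι R : Type*} [Fintype ι]
    [AddCommMonoid R] [PartialOrder R] [IsOrderedCancelAddMonoid R] [DecidableEq R]
    [One R] [NeZero (1 : R)]
    {f : ι → R} (hf : ∀ i, 0 ≤ f i) (hsum : ∑ i, f i = 1) :
    Fintype.card {i // f i ≠ 0} = 1 ↔ ∃ i, f i = 1 := by
  classical
  rw [Fintype.card_eq_one_iff]
  constructor
  · rintro ⟨⟨i, _⟩, huniq⟩
    have hzero : ∀ j, j ≠ i → f j = 0 := fun j hji => by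
      by_contra hj
      exact hji (congrArg Subtype.val (huniq ⟨j, hj⟩))
    exact ⟨i, by rw [← hsum, Finset.sum_eq_single i (fun j _ => hzero j) (by simp)]⟩
  · rintro ⟨i, hi⟩
    have hrest : ∑ j ∈ Finset.univ.erase i, f j = 0 := by
      have := Finset.add_sum_erase Finset.univ f (Finset.mem_univ i)
      rw [hsum, hi] at this
      exact add_eq_left.mp this
    refine ⟨⟨i, hi ▸ one_ne_zero⟩, fun ⟨j, hj⟩ => Subtype.ext ?_⟩
    by_contra hji
    exact hj ((Finset.sum_eq_zero_iff_of_nonneg fun k _ => hf k).mp hrest j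
      (Finset.mem_erase.mpr ⟨hji, Finset.mem_univ j⟩))

namespace Matrix.IsHermitian

variable {𝕜 n : Type*} [RCLike 𝕜] [Fintype n] [DecidableEq n] {A : Matrix n n 𝕜}

theorem det_sub_one_eq_zero_iff (hA : A.IsHermitian) :
    det (A - 1) = 0 ↔ ∃ i, hA.eigenvalues i = 1 := by
  have h := (spectrum.mem_iff (r := (1 : 𝕜)) (a := A)).symm
  rw [hA.spectrum_eq_image_range, map_one, ← neg_sub, IsUnit.neg_iff, isUnit_iff_isUnit_det,
    isUnit_iff_ne_zero, not_not] at h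
  simp [h]

theorem sum_eigenvalues_eq_one (hA : A.IsHermitian) (htr : A.trace = 1) :
    ∑ i, hA.eigenvalues i = 1 := by
  exact_mod_cast hA.trace_eq_sum_eigenvalues.symm.trans htr

end Matrix.IsHermitian

theorem rank_one_iff_det_sub_one_general {m : Type*} [Fintype m] [DecidableEq m]
    (M : Matrix m m ℂ) (hpsd : M.PosSemidef) (htr : M.trace = 1) :
    M.rank = 1 ↔ Matrix.det (M - 1) = 0 := by
  rw [hpsd.1.rank_eq_card_non_zero_eigs, hpsd.1.det_sub_one_eq_zero_iff]
  exact card_ne_zero_eq_one_iff_exists_eq_one hpsd.eigenvalues_nonneg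
    (hpsd.1.sum_eigenvalues_eq_one htr)

/-- A Hermitian positive semidefinite complex matrix of trace 1 has rank 1 iff
`det (M - 1) = 0`. -/
theorem rank_one_iff_det_sub_one {m : Type*} [Fintype m] [DecidableEq m] [Nonempty m]
    (M : Matrix m m ℂ) (hherm : Mᴴ = M) (hpsd : M.PosSemidef) (htr : M.trace = 1) :
    M.rank = 1 ↔ Matrix.det (M - 1) = 0 :=
  rank_one_iff_det_sub_one_general M hpsd htr
end
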